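/- For any graph G, γ_gr^t(G) ≤ 2·bc(G), where bc(G) is the minimum number of complete bipartite subgraphs needed to cover all edges of G. -/

import Mathlib

open SimpleGraph

/-- A legal open neighborhood sequence in `G`. -/
def IsOpenLegal {α : Type*} (G : SimpleGraph α) (L : List α) : Prop :=
  L.Nodup ∧ ∀ i : Fin L.length, ∃ w, G.Adj (L.get i) w ∧
    ∀ j : Fin L.length, j < i → ¬ G.Adj (L.get j) w

/-- The Grundy total domination number of `G`. -/
noncomputable def grundyT {α : Type*} (G : SimpleGraph α) : ℕ :=
  sSup {n | ∃ L : List α, IsOpenLegal G L ∧ L.length = n}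

/-- A legal closed neighborhood (dominating) sequence in `G`. -/
def IsClosedLegal {α : Type*} (G : SimpleGraph α) (L : List α) : Prop :=
  L.Nodup ∧ ∀ i : Fin L.length, ∃ w, (G.Adj (L.get i) w ∨ L.get i = w) ∧
    ∀ j : Fin L.length, j < i → ¬ (G.Adj (L.get j) w ∨ L.get j = w)

/-- The Grundy domination number of `G`. -/
noncomputable def grundyDom {α : Type*} (G : SimpleGraph α) : ℕ :=
  sSup {n | ∃ L : List α, IsClosedLegal G L ∧ L.length = n}

/-- The direct (tensor) product of simple graphs. -/
def directProd {α β : Type*} (G : SimpleGraph α) (H : SimpleGraph β) : SimpleGraph (α × β) where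
  Adj x y := G.Adj x.1 y.1 ∧ H.Adj x.2 y.2
  symm := ⟨fun _ _ h => ⟨h.1.symm, h.2.symm⟩⟩
  loopless := ⟨fun _ h => h.1.ne rfl⟩

/-- The lexicographic product of simple graphs. -/
def lexProd {α β : Type*} (G : SimpleGraph α) (H : SimpleGraph β) : SimpleGraph (α × β) where
  Adj x y := G.Adj x.1 y.1 ∨ (x.1 = y.1 ∧ H.Adj x.2 y.2)
  symm := by
    constructor
    rintro x y (h | ⟨h1, h2⟩)
    · exact Or.inl h.symm
    · exact Or.inr ⟨h1.symm, h2.symm⟩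
  loopless := by
    constructor
    rintro x (h | ⟨_, h⟩)
    · exact h.ne rfl
    · exact h.ne rfl

/-- The strong product of simple graphs. -/
def strongProd {α β : Type*} (G : SimpleGraph α) (H : SimpleGraph β) : SimpleGraph (α × β) where
  Adj x y := (G.Adj x.1 y.1 ∧ x.2 = y.2) ∨ (x.1 = y.1 ∧ H.Adj x.2 y.2) ∨
    (G.Adj x.1 y.1 ∧ H.Adj x.2 y.2)
  symm := by
    constructor
    rintro x y (⟨h, e⟩ | ⟨e, h⟩ | ⟨h1, h2⟩)
    · exact Or.inl ⟨h.symm, e.symm⟩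
    · exact Or.inr (Or.inl ⟨e.symm, h.symm⟩)
    · exact Or.inr (Or.inr ⟨h1.symm, h2.symm⟩)
  loopless := by
    constructor
    rintro x (⟨h, _⟩ | ⟨_, h⟩ | ⟨h, _⟩)
    · exact h.ne rfl
    · exact h.ne rfl
    · exact h.ne rfl

/-- The minimum number of complete bipartite subgraphs of `G` covering all edges of `G`. -/
noncomputable def bc {α : Type*} (G : SimpleGraph α) : ℕ :=
  sInf {k | ∃ A B : Fin k → Set α,
    (∀ i a b, a ∈ A i → b ∈ B i → G.Adj a b) ∧
    (∀ u v, G.Adj u v → ∃ i, (u ∈ A i ∧ v ∈ B i) ∨ (v ∈ A i ∧ u ∈ B i))}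

/-- `aD G L` is the number of entries of `L` not adjacent to any earlier entry. -/
noncomputable def aD {α : Type*} (G : SimpleGraph α) (L : List α) : ℕ :=
  {i : Fin L.length | ∀ j : Fin L.length, j < i → ¬ G.Adj (L.get j) (L.get i)}.ncard

/-- The vertex cover number of `G`. -/
noncomputable def vertexCoverNum {α : Type*} (G : SimpleGraph α) : ℕ :=
  sInf {n | ∃ S : Finset α, S.card = n ∧ ∀ u v, G.Adj u v → u ∈ S ∨ v ∈ S}

/-- The independence number of `G`. -/
noncomputable def indepNum {α : Type*} (G : SimpleGraph α) : ℕ :=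
  sSup {n | ∃ S : Finset α, S.card = n ∧ ∀ u ∈ S, ∀ v ∈ S, ¬ G.Adj u v}

/-!
Fix a cover of `E(G)` by `bc G` bicliques `(A t, B t)`. In a legal sequence `(v_1, …, v_k)` let
`w_i` be a vertex footprinted by `v_i`, and label `i` by a biclique `t` containing the edge
`v_i w_i` together with the side of `t` on which `v_i` lies. Two indices `i < i'` cannot share a
label: `v_i` and `w_{i'}` would lie on opposite sides of `t`, so `w_{i'}` would already be
dominated by `v_i`. Hence `k ≤ 2 · bc G`.
-/

namespace SimpleGraph

variable {α ι κ : Type*} (G : SimpleGraph α)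

def IsBicliqueCover (A B : ι → Set α) : Prop :=
  (∀ i a b, a ∈ A i → b ∈ B i → G.Adj a b) ∧
    (∀ u v, G.Adj u v → ∃ i, (u ∈ A i ∧ v ∈ B i) ∨ (v ∈ A i ∧ u ∈ B i))

/-- The pairs `(u, v)` that are not edges index empty bicliques. -/
theorem isBicliqueCover_edges :
    G.IsBicliqueCover (fun p : α × α => {u | u = p.1 ∧ G.Adj p.1 p.2}) (fun p => {p.2}) := by
  refine ⟨?_, fun u v huv => ⟨(u, v), Or.inl ⟨⟨rfl, huv⟩, rfl⟩⟩⟩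
  rintro p a b ⟨rfl, hp⟩ rfl
  exact hp

variable {G} {A B : ι → Set α}

theorem IsBicliqueCover.comp_equiv (hC : G.IsBicliqueCover A B) (e : κ ≃ ι) :
    G.IsBicliqueCover (A ∘ e) (B ∘ e) := by
  refine ⟨fun k => hC.1 (e k), fun u v huv => ?_⟩
  obtain ⟨i, hi⟩ := hC.2 u v huv
  exact ⟨e.symm i, by simpa using hi⟩

theorem exists_isBicliqueCover_fin_bc [Finite α] (G : SimpleGraph α) :
    ∃ A B : Fin (bc G) → Set α, G.IsBicliqueCover A B :=
  Nat.sInf_mem (s := {k | ∃ A B : Fin k → Set α, G.IsBicliqueCover A B})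
    ⟨_, _, _, (isBicliqueCover_edges G).comp_equiv (Finite.equivFin (α × α)).symm⟩

theorem IsBicliqueCover.exists_side (hC : G.IsBicliqueCover A B) {u v : α} (huv : G.Adj u v) :
    ∃ i b, u ∈ cond b (A i) (B i) ∧ v ∈ cond (!b) (A i) (B i) := by
  obtain ⟨i, ⟨hu, hv⟩ | ⟨hv, hu⟩⟩ := hC.2 u v huv
  · exact ⟨i, true, hu, hv⟩
  · exact ⟨i, false, hu, hv⟩

theorem IsBicliqueCover.adj_of_mem_side (hC : G.IsBicliqueCover A B) {i : ι} {b : Bool}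
    {u v : α} (hu : u ∈ cond b (A i) (B i)) (hv : v ∈ cond (!b) (A i) (B i)) : G.Adj u v := by
  cases b
  · exact (hC.1 i v u hv hu).symm
  · exact hC.1 i u v hu hv

theorem _root_.IsOpenLegal.length_le_two_mul_card [Fintype ι] (hC : G.IsBicliqueCover A B)
    {L : List α} (hL : IsOpenLegal G L) : L.length ≤ 2 * Fintype.card ι := by
  choose w hw hw_new using hL.2
  choose t s hs using fun i => hC.exists_side (hw i)
  have label_inj : Function.Injective fun i => (t i, s i) := by
    refine Function.Injective.of_lt_imp_ne fun i i' hlt heq => ?_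
    obtain ⟨hti, hsi⟩ := Prod.mk.inj heq
    have hv : L.get i ∈ cond (s i') (A (t i')) (B (t i')) := hti ▸ hsi ▸ (hs i).1
    exact hw_new i' i hlt (hC.adj_of_mem_side hv (hs i').2)
  simpa [mul_comm] using Fintype.card_le_of_injective _ label_inj

end SimpleGraph

theorem grundyT_le_two_mul_bc {α : Type*} [Fintype α] (G : SimpleGraph α) :
    grundyT G ≤ 2 * bc G := by
  obtain ⟨A, B, hC⟩ := G.exists_isBicliqueCover_fin_bc
  refine csSup_le' ?_
  rintro _ ⟨L, hL, rfl⟩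
  simpa using hL.length_le_two_mul_card hC
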